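/- arXiv:1401.7697 — 4 statements merged into one kernel-verified Lean document; each statement's English description precedes it below -/
import Mathlib

section
/- Let U ⊆ ℝ^N be open, let φ : ℝ^N → ℝ be twice continuously differentiable on U with ‖∇φ(x)‖ = 1 for every x ∈ U, and define p : U → ℝ^N by p(x) = x − φ(x)·∇φ(x). Let g : ℝ^N → ℝ be differentiable. Then for every x ∈ U the directional derivative of g ∘ p at x in the direction ∇φ(x) vanishes: D(g ∘ p)(x)[∇φ(x)] = 0. -/
/-!
Writing `n = ∇φ` and `H` for the derivative of `∇φ` at `x` (the Hessian), the chain rule gives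
`Dp(x) n = n - φ(x) H n - ⟪n, n⟫ n`. Differentiating the eikonal identity `‖∇φ‖² = 1` shows
`⟪H v, n⟫ = 0` for all `v`, and since `H` is symmetric this forces `H n = 0`; with `⟪n, n⟫ = 1`
we get `Dp(x) n = 0`, hence `D(g ∘ p)(x) n = Dg(p x) 0 = 0`.
-/

open Filter Topology InnerProductSpace
open scoped Gradient

theorem inner_fderiv_apply_self_eq_zero_of_eventually_norm_eq
    {G F : Type*} [NormedAddCommGroup G] [NormedSpace ℝ G]
    [NormedAddCommGroup F] [InnerProductSpace ℝ F] {f : G → F} {x : G} {c : ℝ}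
    (hf : DifferentiableAt ℝ f x) (hc : ∀ᶠ y in 𝓝 x, ‖f y‖ = c) (v : G) :
    ⟪fderiv ℝ f x v, f x⟫_ℝ = 0 := by
  have hconst : HasFDerivAt (‖f ·‖ ^ 2) (0 : G →L[ℝ] ℝ) x :=
    (hasFDerivAt_const (c ^ 2) x).congr_of_eventuallyEq (hc.mono fun y hy => by simp [hy])
  have h := congrArg (· v) (hf.hasFDerivAt.norm_sq.unique hconst)
  simp only [smul_apply, ContinuousLinearMap.comp_apply, coe_innerSL_apply, nsmul_eq_mul,
    Nat.cast_ofNat, zero_apply, mul_eq_zero, OfNat.ofNat_ne_zero, false_or] at h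
  rwa [real_inner_comm]

section Gradient

variable {E : Type*} [NormedAddCommGroup E] [InnerProductSpace ℝ E] [CompleteSpace E]
  {φ : E → ℝ} {x : E}

theorem inner_fderiv_gradient_apply (v w : E) :
    ⟪fderiv ℝ (∇ φ) x v, w⟫_ℝ = fderiv ℝ (fderiv ℝ φ) x v w := by
  change ⟪fderiv ℝ ((toDual ℝ E).symm ∘ fderiv ℝ φ) x v, w⟫_ℝ = _
  rw [LinearIsometryEquiv.comp_fderiv]
  exact toDual_symm_apply

theorem ContDiffAt.differentiableAt_gradient (hφ : ContDiffAt ℝ 2 φ x) :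
    DifferentiableAt ℝ (∇ φ) x :=
  (toDual ℝ E).symm.differentiableAt.comp x
    ((hφ.fderiv_right (m := 1) (by norm_num)).differentiableAt one_ne_zero)

theorem ContDiffAt.inner_fderiv_gradient_comm (hφ : ContDiffAt ℝ 2 φ x) (v w : E) :
    ⟪fderiv ℝ (∇ φ) x v, w⟫_ℝ = ⟪v, fderiv ℝ (∇ φ) x w⟫_ℝ := by
  rw [real_inner_comm _ v, inner_fderiv_gradient_apply, inner_fderiv_gradient_apply,
    hφ.isSymmSndFDerivAt (by simp)]

theorem ContDiffAt.fderiv_gradient_apply_gradient_eq_zero (hφ : ContDiffAt ℝ 2 φ x)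
    (heik : ∀ᶠ y in 𝓝 x, ‖∇ φ y‖ = 1) :
    fderiv ℝ (∇ φ) x (∇ φ x) = 0 := by
  refine ext_inner_right ℝ fun w => ?_
  rw [hφ.inner_fderiv_gradient_comm, real_inner_comm, inner_zero_left,
    inner_fderiv_apply_self_eq_zero_of_eventually_norm_eq hφ.differentiableAt_gradient heik]

theorem ContDiffAt.hasFDerivAt_sub_smul_gradient (hφ : ContDiffAt ℝ 2 φ x) :
    HasFDerivAt (fun y => y - φ y • ∇ φ y)
      (.id ℝ E - (φ x • fderiv ℝ (∇ φ) x + (fderiv ℝ φ x).smulRight (∇ φ x))) x :=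
  (hasFDerivAt_id x).sub
    ((hφ.differentiableAt two_ne_zero).hasFDerivAt.smul hφ.differentiableAt_gradient.hasFDerivAt)

theorem ContDiffAt.fderiv_sub_smul_gradient_apply_gradient_eq_zero (hφ : ContDiffAt ℝ 2 φ x)
    (heik : ∀ᶠ y in 𝓝 x, ‖∇ φ y‖ = 1) :
    fderiv ℝ (fun y => y - φ y • ∇ φ y) x (∇ φ x) = 0 := by
  have hunit : fderiv ℝ φ x (∇ φ x) = 1 := by
    rw [← inner_gradient_left, real_inner_self_eq_norm_sq, heik.self_of_nhds, one_pow]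
  rw [hφ.hasFDerivAt_sub_smul_gradient.fderiv]
  simp [hφ.fderiv_gradient_apply_gradient_eq_zero heik, hunit]

end Gradient

/-- The normal extension is constant in the normal direction (equation (3.5)):
with `p(x) = x − φ(x)∇φ(x)` and `‖∇φ‖ = 1` on `U`, the directional derivative of
`g ∘ p` along `∇φ(x)` vanishes at every `x ∈ U`. -/
theorem stmt11 {N : ℕ} {U : Set (EuclideanSpace ℝ (Fin N))} (hU : IsOpen U)
    {φ : EuclideanSpace ℝ (Fin N) → ℝ} (hφ : ContDiffOn ℝ 2 φ U)
    (heik : ∀ x ∈ U, ‖gradient φ x‖ = 1)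
    (p : EuclideanSpace ℝ (Fin N) → EuclideanSpace ℝ (Fin N))
    (hp : ∀ x, p x = x - φ x • gradient φ x)
    {g : EuclideanSpace ℝ (Fin N) → ℝ} (hg : Differentiable ℝ g) :
    ∀ x ∈ U, fderiv ℝ (g ∘ p) x (gradient φ x) = 0 := by
  intro x hx
  obtain rfl : p = fun y => y - φ y • ∇ φ y := funext hp
  have hφx : ContDiffAt ℝ 2 φ x := hφ.contDiffAt (hU.mem_nhds hx)
  rw [fderiv_comp x (hg _) hφx.hasFDerivAt_sub_smul_gradient.differentiableAt,
    ContinuousLinearMap.comp_apply,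
    hφx.fderiv_sub_smul_gradient_apply_gradient_eq_zero
      (eventually_of_mem (hU.mem_nhds hx) heik), map_zero]
end

section
/- Let N ≥ 2, let n ∈ ℝ^N be a unit vector, and let D be a symmetric positive semidefinite real N×N matrix with D·n = 0 such that D + d·(n nᵀ) is positive definite for every d > 0. Define K(A) = (tr(A)/N)^N / det(A) for positive definite A. Then the choice d* = tr(D)/(N−1) minimizes d ↦ K(D + d·(n nᵀ)) over d > 0; that is, for every d > 0, K(D + d*·(n nᵀ)) ≤ K(D + d·(n nᵀ)). -/
/-!
Since `D n = 0` and `|n| = 1`, the matrix `D + n nᵀ` fixes `n`, so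
`D + d n nᵀ = (D + n nᵀ)(1 + (d - 1) n nᵀ)` and the rank-one determinant formula gives
`det (D + d n nᵀ) = d · det (D + n nᵀ)`, while `tr (D + d n nᵀ) = tr D + d`.
Up to the positive factor `det (D + n nᵀ)`, `K` is therefore `((tr D + d)/N)^N / d`, and comparing
this at `d` and at `c = tr D/(N - 1)` is Bernoulli's inequality for `u = d/c`
(equivalently AM–GM for `N - 1` copies of `c` and one copy of `d`).
-/

/-- The K-condition number `K(A) = (tr(A)/N)^N / det(A)` of an `N × N` matrix. -/
noncomputable def Kcond {N : ℕ} (A : Matrix (Fin N) (Fin N) ℝ) : ℝ :=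
  (A.trace / (N : ℝ)) ^ N / A.det

open Matrix

lemma EuclideanSpace.dotProduct_self_eq_one {ι : Type*} [Fintype ι] {n : EuclideanSpace ℝ ι}
    (hn : ‖n‖ = 1) : n.ofLp ⬝ᵥ n.ofLp = 1 := by
  have h := real_inner_self_eq_norm_sq n
  rw [EuclideanSpace.inner_eq_star_dotProduct, hn] at h
  simpa using h

namespace Matrix

variable {m R : Type*} [Fintype m] [CommRing R]

theorem trace_add_smul_vecMulVec_self {D : Matrix m m R} {n : m → R} (hn : n ⬝ᵥ n = 1) (e : R) :
    (D + e • vecMulVec n n).trace = D.trace + e := by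
  rw [trace_add, trace_smul, trace_vecMulVec, hn, smul_eq_mul, mul_one]

variable [DecidableEq m]

theorem det_add_vecMulVec_of_mulVec_eq_self {A : Matrix m m R} {u : m → R} (hA : A *ᵥ u = u)
    (w : m → R) : (A + vecMulVec u w).det = A.det * (1 + w ⬝ᵥ u) := by
  have hfactor : A + vecMulVec u w = A * (1 + vecMulVec u w) := by
    rw [Matrix.mul_add, Matrix.mul_one, mul_vecMulVec, hA]
  rw [hfactor, det_mul, vecMulVec_eq Unit, det_one_add_replicateCol_mul_replicateRow]

theorem det_add_smul_vecMulVec_self {D : Matrix m m R} {n : m → R} (hDn : D *ᵥ n = 0)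
    (hn : n ⬝ᵥ n = 1) (e : R) :
    (D + e • vecMulVec n n).det = e * (D + vecMulVec n n).det := by
  have hfix : (D + vecMulVec n n) *ᵥ n = n := by
    rw [add_mulVec, hDn, vecMulVec_mulVec, hn, zero_add, MulOpposite.op_one, one_smul]
  have hsplit : D + e • vecMulVec n n = D + vecMulVec n n + vecMulVec n ((e - 1) • n) := by
    rw [vecMulVec_smul, add_assoc, sub_smul, one_smul, add_sub_cancel]
  rw [hsplit, det_add_vecMulVec_of_mulVec_eq_self hfix, smul_dotProduct, hn, smul_eq_mul]
  ring

end Matrix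

lemma le_one_add_sub_one_div_pow {N : ℕ} (hN : 1 ≤ N) {u : ℝ} (hu : 0 ≤ u) :
    u ≤ (1 + (u - 1) / N) ^ N := by
  have hN' : (1 : ℝ) ≤ N := by exact_mod_cast hN
  have hbound : (-2 : ℝ) ≤ (u - 1) / N := by
    rw [le_div_iff₀ (by positivity)]; nlinarith
  calc u = 1 + N * ((u - 1) / N) := by field_simp; ring
    _ ≤ (1 + (u - 1) / N) ^ N := one_add_mul_le_pow hbound N

theorem add_div_pow_div_le {N : ℕ} (hN : 2 ≤ N) {t d : ℝ} (ht : 0 ≤ t) (hd : 0 < d) :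
    ((t + t / (N - 1)) / N) ^ N / (t / (N - 1)) ≤ ((t + d) / N) ^ N / d := by
  have hN1 : (0 : ℝ) < N - 1 := by
    have : (2 : ℝ) ≤ N := by exact_mod_cast hN
    linarith
  rcases ht.eq_or_lt with rfl | ht_pos
  -- for `t = 0` the left side is the junk value `_ / 0 = 0`
  · rw [zero_div, div_zero]; positivity
  set c := t / (N - 1) with hc_def
  have hc : 0 < c := div_pos ht_pos hN1
  have htc : t = (N - 1) * c := by rw [hc_def]; field_simp
  have hmean : (t + c) / N = c := by rw [htc]; field_simp; ring
  set u := d / c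
  have hdu : d = u * c := (div_mul_cancel₀ d hc.ne').symm
  have hmean' : (t + d) / N = c * (1 + (u - 1) / N) := by rw [htc, hdu]; field_simp; ring
  have hbernoulli := le_one_add_sub_one_div_pow (N := N) (by omega) (div_pos hd hc).le
  rw [hmean, div_le_div_iff₀ hc hd, hmean', mul_pow, hdu, ← mul_assoc]
  gcongr

theorem Kcond_add_smul_vecMulVec {N : ℕ} {D : Matrix (Fin N) (Fin N) ℝ} {n : Fin N → ℝ}
    (hDn : D *ᵥ n = 0) (hn : n ⬝ᵥ n = 1) (e : ℝ) :
    Kcond (D + e • vecMulVec n n) = ((D.trace + e) / N) ^ N / e / (D + vecMulVec n n).det := by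
  rw [Kcond, trace_add_smul_vecMulVec_self hn, det_add_smul_vecMulVec_self hDn hn, div_div]

/-- Section 3.2: the choice `d = tr(D)/(N−1)` minimizes the K-condition number of the
volume diffusion tensor `D + d·n nᵀ` over `d > 0`, for a symmetric positive
semidefinite tangential tensor `D` with `D n = 0`. -/
theorem stmt12 {N : ℕ} (hN : 2 ≤ N) (n : EuclideanSpace ℝ (Fin N)) (hn : ‖n‖ = 1)
    {D : Matrix (Fin N) (Fin N) ℝ} (hD : D.PosSemidef) (hDn : D.mulVec n = 0)
    (hpos : ∀ d : ℝ, 0 < d → (D + d • Matrix.vecMulVec n n).PosDef) :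
    ∀ d : ℝ, 0 < d →
      Kcond (D + (D.trace / ((N : ℝ) - 1)) • Matrix.vecMulVec n n) ≤
        Kcond (D + d • Matrix.vecMulVec n n) := by
  intro d hd
  have hnn := EuclideanSpace.dotProduct_self_eq_one hn
  have hdet : 0 < (D + vecMulVec n n).det := by simpa using (hpos 1 one_pos).det_pos
  rw [Kcond_add_smul_vecMulVec hDn hnn, Kcond_add_smul_vecMulVec hDn hnn]
  exact div_le_div_of_nonneg_right (add_div_pow_div_le hN hD.trace_nonneg hd) hdet.le
end

section
/- Let H be a symmetric real 3×3 matrix, let n ∈ ℝ³ be a unit vector with H·n = 0, let t ∈ ℝ satisfy |t| · ‖H‖₂ ≤ 1/2, and set μ = det(I − t·H). Then I − t·H is invertible and for every v ∈ ℝ³: (1/9)·‖v‖² ≤ ⟨μ·(I − t·H)⁻² v, v⟩ ≤ 9·‖v‖², where (I − t·H)⁻² = ((I − t·H)⁻¹)² and ⟨·,·⟩ is the Euclidean inner product. -/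
open Matrix

/-!
`B = 1 - t • H` is symmetric and `‖t • H‖ ≤ 1/2`, so every eigenvalue of `B` lies in `[1/2, 3/2]`,
and `1` is one of them because `B` fixes the unit vector `n`; hence `μ = det B ∈ [1/4, 9/4]`.
By symmetry `⟪μ B⁻² v, v⟫ = μ ‖B⁻¹ v‖²`, and `‖w‖ / 2 ≤ ‖B w‖ ≤ 3 ‖w‖ / 2` applied to `w = B⁻¹ v`
gives `4/9 ‖v‖² ≤ ‖B⁻¹ v‖² ≤ 4 ‖v‖²`.
-/

/-- The spectral (ℓ²-operator) norm of a real matrix. -/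
noncomputable def spectralNorm2 {N : ℕ} (A : Matrix (Fin N) (Fin N) ℝ) : ℝ :=
  ‖Matrix.toEuclideanCLM (𝕜 := ℝ) A‖

open Finset in
theorem prod_mem_Icc_of_eq_one {ι : Type*} [Fintype ι] {f : ι → ℝ} {a b : ℝ} (ha : 0 ≤ a)
    (hf : ∀ i, f i ∈ Set.Icc a b) {j : ι} (hj : f j = 1) :
    ∏ i, f i ∈ Set.Icc (a ^ (Fintype.card ι - 1)) (b ^ (Fintype.card ι - 1)) := by
  classical
  rw [← mul_prod_erase univ f (mem_univ j), hj, one_mul, Fintype.card,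
    ← card_erase_of_mem (mem_univ j), ← prod_const, ← prod_const]
  exact ⟨prod_le_prod (fun _ _ ↦ ha) fun i _ ↦ (hf i).1,
    prod_le_prod (fun i _ ↦ ha.trans (hf i).1) fun i _ ↦ (hf i).2⟩

namespace Matrix

variable {N : ℕ}

theorem spectralNorm2_smul (t : ℝ) (A : Matrix (Fin N) (Fin N) ℝ) :
    spectralNorm2 (t • A) = |t| * spectralNorm2 A := by
  rw [spectralNorm2, map_smul, norm_smul, Real.norm_eq_abs, spectralNorm2]

theorem norm_toLp_mulVec_le (A : Matrix (Fin N) (Fin N) ℝ) (x : Fin N → ℝ) :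
    ‖WithLp.toLp 2 (A *ᵥ x)‖ ≤ spectralNorm2 A * ‖WithLp.toLp 2 x‖ :=
  (toEuclideanCLM (𝕜 := ℝ) A).le_opNorm (WithLp.toLp 2 x)

theorem dotProduct_self_eq_norm_toLp_sq (x : Fin N → ℝ) : x ⬝ᵥ x = ‖WithLp.toLp 2 x‖ ^ 2 := by
  rw [← real_inner_self_eq_norm_sq, EuclideanSpace.inner_toLp_toLp, star_trivial]

theorem abs_le_spectralNorm2_of_mulVec_eq_smul {A : Matrix (Fin N) (Fin N) ℝ} {x : Fin N → ℝ}
    {c : ℝ} (hx : x ≠ 0) (h : A *ᵥ x = c • x) : |c| ≤ spectralNorm2 A := by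
  have hpos : 0 < ‖WithLp.toLp 2 x‖ := norm_pos_iff.2 ((WithLp.toLp_eq_zero 2).ne.2 hx)
  have := norm_toLp_mulVec_le A x
  rw [h, WithLp.toLp_smul, norm_smul, Real.norm_eq_abs] at this
  exact le_of_mul_le_mul_right this hpos

theorem norm_toLp_one_sub_mulVec_mem_Icc {A : Matrix (Fin N) (Fin N) ℝ} {r : ℝ}
    (hA : spectralNorm2 A ≤ r) (x : Fin N → ℝ) :
    ‖WithLp.toLp 2 ((1 - A) *ᵥ x)‖ ∈
      Set.Icc ((1 - r) * ‖WithLp.toLp 2 x‖) ((1 + r) * ‖WithLp.toLp 2 x‖) := by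
  have hAx : ‖WithLp.toLp 2 (A *ᵥ x)‖ ≤ r * ‖WithLp.toLp 2 x‖ :=
    (norm_toLp_mulVec_le A x).trans (mul_le_mul_of_nonneg_right hA (norm_nonneg _))
  rw [sub_mulVec, one_mulVec, WithLp.toLp_sub]
  constructor
  · linarith [norm_sub_norm_le (WithLp.toLp 2 x) (WithLp.toLp 2 (A *ᵥ x))]
  · linarith [norm_sub_le (WithLp.toLp 2 x) (WithLp.toLp 2 (A *ᵥ x))]

theorem IsHermitian.exists_eigenvalues_eq {A : Matrix (Fin N) (Fin N) ℝ} (hA : A.IsHermitian)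
    {x : Fin N → ℝ} {c : ℝ} (hx : x ≠ 0) (h : A *ᵥ x = c • x) : ∃ i, hA.eigenvalues i = c := by
  rw [← Set.mem_range, ← hA.spectrum_real_eq_range_eigenvalues, spectrum.mem_iff,
    isUnit_iff_isUnit_det, isUnit_iff_ne_zero, not_not, ← exists_mulVec_eq_zero_iff]
  exact ⟨x, hx, by simp [sub_mulVec, h, Algebra.algebraMap_eq_smul_one, smul_mulVec]⟩

theorem IsHermitian.abs_one_sub_eigenvalues_le {B : Matrix (Fin N) (Fin N) ℝ}
    (hB : B.IsHermitian) (i : Fin N) : |1 - hB.eigenvalues i| ≤ spectralNorm2 (1 - B) := by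
  refine abs_le_spectralNorm2_of_mulVec_eq_smul
    ((WithLp.ofLp_eq_zero 2).ne.2 (hB.eigenvectorBasis.orthonormal.ne_zero i)) ?_
  rw [sub_mulVec, one_mulVec, hB.mulVec_eigenvectorBasis, sub_smul, one_smul]

theorem IsHermitian.sq_mulVec_dotProduct {S : Matrix (Fin N) (Fin N) ℝ} (hS : S.IsHermitian)
    (v : Fin N → ℝ) : (S ^ 2) *ᵥ v ⬝ᵥ v = S *ᵥ v ⬝ᵥ S *ᵥ v := by
  rw [pow_two, ← mulVec_mulVec, dotProduct_comm, dotProduct_mulVec, ← mulVec_transpose,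
    (isHermitian_iff_isSymm.1 hS).eq]

end Matrix

/-- Uniform two-sided bound on the coefficient matrix `μ(I − t·H)⁻²` of the extended
problem (3.3)–(3.4): under the spectrum bounds (2.9) one has
`(1/9)‖v‖² ≤ ⟨μ(I − t·H)⁻² v, v⟩ ≤ 9‖v‖²` for every `v ∈ ℝ³` (here `‖v‖² = v ⬝ᵥ v`). -/
theorem stmt14 {H : Matrix (Fin 3) (Fin 3) ℝ} (hH : H.IsHermitian)
    (n : EuclideanSpace ℝ (Fin 3)) (hn : ‖n‖ = 1) (hHn : H.mulVec n = 0)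
    {t : ℝ} (ht : |t| * spectralNorm2 H ≤ 1 / 2) (μ : ℝ)
    (hμ : μ = ((1 : Matrix (Fin 3) (Fin 3) ℝ) - t • H).det) :
    IsUnit ((1 : Matrix (Fin 3) (Fin 3) ℝ) - t • H) ∧
      ∀ v : Fin 3 → ℝ,
        1 / 9 * (v ⬝ᵥ v) ≤ (μ • (1 - t • H)⁻¹ ^ 2).mulVec v ⬝ᵥ v ∧
          (μ • (1 - t • H)⁻¹ ^ 2).mulVec v ⬝ᵥ v ≤ 9 * (v ⬝ᵥ v) := by
  set B : Matrix (Fin 3) (Fin 3) ℝ := 1 - t • H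
  have hB : B.IsHermitian := isHermitian_one.sub (hH.smul (IsSelfAdjoint.all t))
  have htH : spectralNorm2 (t • H) ≤ 1 / 2 := by rwa [spectralNorm2_smul]
  have heig (i : Fin 3) : hB.eigenvalues i ∈ Set.Icc (1 / 2) (3 / 2) := by
    have := hB.abs_one_sub_eigenvalues_le i
    rw [sub_sub_cancel] at this
    replace := abs_le.1 (this.trans htH)
    constructor <;> linarith [this.1, this.2]
  obtain ⟨j, hj⟩ := hB.exists_eigenvalues_eq (c := 1) (x := WithLp.ofLp n)
    ((WithLp.ofLp_eq_zero 2).ne.2 (norm_ne_zero_iff.1 (by rw [hn]; exact one_ne_zero)))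
    (by rw [sub_mulVec, one_mulVec, smul_mulVec, hHn, smul_zero, sub_zero, one_smul])
  have hμ_mem : μ ∈ Set.Icc (1 / 4) (9 / 4) := by
    have := prod_mem_Icc_of_eq_one (by norm_num) heig hj
    rw [hμ, hB.det_eq_prod_eigenvalues]
    norm_num at this ⊢
    exact this
  have hdet : IsUnit B.det := isUnit_iff_ne_zero.2 (by rw [← hμ]; linarith [hμ_mem.1])
  refine ⟨(isUnit_iff_isUnit_det B).2 hdet, fun v ↦ ?_⟩
  have hw := norm_toLp_one_sub_mulVec_mem_Icc htH (B⁻¹ *ᵥ v)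
  rw [mulVec_mulVec, mul_nonsing_inv B hdet, one_mulVec] at hw
  rw [smul_mulVec, smul_dotProduct, hB.inv.sq_mulVec_dotProduct, smul_eq_mul,
    dotProduct_self_eq_norm_toLp_sq, dotProduct_self_eq_norm_toLp_sq]
  have := norm_nonneg (WithLp.toLp 2 (B⁻¹ *ᵥ v))
  obtain ⟨hμ₁, hμ₂⟩ := hμ_mem
  obtain ⟨hw₁, hw₂⟩ := hw
  constructor <;> nlinarith
end

section
/- Let N ≥ 1. There exists a constant C > 0 such that for all symmetric real N×N matrices A and B whose eigenvalues all lie in the interval [1/2, 3/2], one has ‖det(A)·A⁻² − det(B)·B⁻²‖₂ ≤ C·‖A − B‖₂ and |det(A) − det(B)| ≤ C·‖A − B‖₂, where A⁻² = (A⁻¹)². -/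
open scoped Matrix.Norms.L2Operator

theorem spectralNorm2_eq_norm {N : ℕ} (A : Matrix (Fin N) (Fin N) ℝ) : spectralNorm2 A = ‖A‖ :=
  rfl

namespace Matrix

variable {n : Type*} [Fintype n] [DecidableEq n]

theorem IsHermitian.norm_sub_algebraMap_le {A : Matrix n n ℝ} (hA : A.IsHermitian) {c r : ℝ}
    (hr : 0 ≤ r) (h : ∀ i, |hA.eigenvalues i - c| ≤ r) :
    ‖A - algebraMap ℝ (Matrix n n ℝ) c‖ ≤ r := by
  have hA' : IsSelfAdjoint A := hA
  have hcfc : A - algebraMap ℝ (Matrix n n ℝ) c = cfc (fun x : ℝ => x - c) A := by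
    rw [cfc_sub (fun x : ℝ => x) (fun _ => c) A, cfc_id' ℝ A, cfc_const c A]
  rw [hcfc]
  refine norm_cfc_le hr ?_
  rw [hA.spectrum_real_eq_range_eigenvalues]
  rintro _ ⟨i, rfl⟩
  exact h i

theorem IsHermitian.mem_closedBall_one {A : Matrix n n ℝ} (hA : A.IsHermitian)
    (h : ∀ i, hA.eigenvalues i ∈ Set.Icc (1 / 2 : ℝ) (3 / 2)) :
    A ∈ Metric.closedBall 1 (1 / 2) := by
  rw [mem_closedBall_iff_norm, ← map_one (algebraMap ℝ (Matrix n n ℝ))]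
  exact hA.norm_sub_algebraMap_le (by norm_num) fun i =>
    abs_sub_le_iff.2 ⟨by linarith [(h i).2], by linarith [(h i).1]⟩

theorem contDiff_entry (i j : n) {k : WithTop ℕ∞} :
    ContDiff ℝ k (fun X : Matrix n n ℝ => X i j) :=
  (LinearMap.toContinuousLinearMap (entryLinearMap ℝ ℝ i j)).contDiff

theorem contDiff_det {k : WithTop ℕ∞} : ContDiff ℝ k (fun X : Matrix n n ℝ => X.det) := by
  simp only [det_apply]
  exact ContDiff.sum fun σ _ => (contDiff_prod fun i _ => contDiff_entry _ _).const_smul _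

theorem contDiffAt_det_smul_inv_sq {X : Matrix n n ℝ} (hX : IsUnit X) {k : WithTop ℕ∞} :
    ContDiffAt ℝ k (fun Y : Matrix n n ℝ => Y.det • Y⁻¹ ^ 2) X := by
  simp only [nonsing_inv_eq_ringInverse]
  exact contDiff_det.contDiffAt.smul ((contDiffAt_ringInverse ℝ hX.unit).pow 2)

theorem exists_lipschitzOnWith_det (X₀ : Matrix n n ℝ) (r : ℝ) :
    ∃ K, LipschitzOnWith K (fun X : Matrix n n ℝ => X.det) (Metric.closedBall X₀ r) :=
  contDiff_det.contDiffOn.exists_lipschitzOnWith one_ne_zero (convex_closedBall _ _)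
    (isCompact_closedBall _ _)

theorem exists_lipschitzOnWith_det_smul_inv_sq {r : ℝ} (hr : r < 1) :
    ∃ K, LipschitzOnWith K (fun X : Matrix n n ℝ => X.det • X⁻¹ ^ 2) (Metric.closedBall 1 r) := by
  refine ContDiffOn.exists_lipschitzOnWith (n := 1) (fun X hX => ?_) one_ne_zero
    (convex_closedBall _ _) (isCompact_closedBall _ _)
  have hX : IsUnit X := by
    simpa using isUnit_one_sub_of_norm_lt_one ((mem_closedBall_iff_norm'.1 hX).trans_lt hr)
  exact (contDiffAt_det_smul_inv_sq hX).contDiffWithinAt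

end Matrix

theorem stmt15_general {N : ℕ} :
    ∃ C : ℝ, 0 < C ∧
      ∀ (A B : Matrix (Fin N) (Fin N) ℝ) (hA : A.IsHermitian) (hB : B.IsHermitian),
        (∀ i, hA.eigenvalues i ∈ Set.Icc (1 / 2 : ℝ) (3 / 2)) →
        (∀ i, hB.eigenvalues i ∈ Set.Icc (1 / 2 : ℝ) (3 / 2)) →
        spectralNorm2 (A.det • A⁻¹ ^ 2 - B.det • B⁻¹ ^ 2) ≤ C * spectralNorm2 (A - B) ∧
          |A.det - B.det| ≤ C * spectralNorm2 (A - B) := by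
  obtain ⟨K₁, hK₁⟩ := Matrix.exists_lipschitzOnWith_det_smul_inv_sq (n := Fin N) one_half_lt_one
  obtain ⟨K₂, hK₂⟩ := Matrix.exists_lipschitzOnWith_det (1 : Matrix (Fin N) (Fin N) ℝ) (1 / 2)
  refine ⟨K₁ + K₂ + 1, by positivity, fun A B hA hB hevA hevB => ?_⟩
  have hAS := hA.mem_closedBall_one hevA
  have hBS := hB.mem_closedBall_one hevB
  simp only [spectralNorm2_eq_norm, ← Real.norm_eq_abs]
  exact ⟨(hK₁.norm_sub_le hAS hBS).trans (by gcongr; linarith [K₂.2]),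
    (hK₂.norm_sub_le hAS hBS).trans (by gcongr; linarith [K₁.2])⟩

/-- Consistency estimate from the proof of Theorem 5.3: the map `A ↦ det(A)·A⁻²` and
the determinant are Lipschitz (in spectral norm) on symmetric matrices whose
eigenvalues all lie in `[1/2, 3/2]`. -/
theorem stmt15 {N : ℕ} (hN : 1 ≤ N) :
    ∃ C : ℝ, 0 < C ∧
      ∀ (A B : Matrix (Fin N) (Fin N) ℝ) (hA : A.IsHermitian) (hB : B.IsHermitian),
        (∀ i, hA.eigenvalues i ∈ Set.Icc (1 / 2 : ℝ) (3 / 2)) →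
        (∀ i, hB.eigenvalues i ∈ Set.Icc (1 / 2 : ℝ) (3 / 2)) →
        spectralNorm2 (A.det • A⁻¹ ^ 2 - B.det • B⁻¹ ^ 2) ≤ C * spectralNorm2 (A - B) ∧
          |A.det - B.det| ≤ C * spectralNorm2 (A - B) :=
  stmt15_general
end
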